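/- arXiv:2402.00618 — 2 statements merged into one kernel-verified Lean document; each statement's English description precedes it below -/
import Mathlib

section
/- The positive ideal property of positive (p₁,…,p_m;r)-dominated operators: let 1 ≤ r, p, p₁,…,p_m ≤ ∞ with 1/p = 1/p₁ + ⋯ + 1/p_m + 1/r. If T ∈ 𝓓⁺_{(p₁,…,p_m;r)}(E₁,…,E_m;F), u_j : G_j → E_j are positive bounded linear operators (1 ≤ j ≤ m), and v : F → G is a positive bounded linear operator, then v ∘ T ∘ (u₁,…,u_m) ∈ 𝓓⁺_{(p₁,…,p_m;r)}(G₁,…,G_m;G) and d⁺_{(p₁,…,p_m;r)}(v ∘ T ∘ (u₁,…,u_m)) ≤ ‖v‖ d⁺_{(p₁,…,p_m;r)}(T) ∏_j ‖u_j‖. -/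
/-- The weak `ℓ_p` norm of a finite positive family, over the positive dual unit ball. -/
noncomputable def wnormPos {E : Type*} [NormedAddCommGroup E] [Lattice E] [HasSolidNorm E]
    [IsOrderedAddMonoid E] [NormedSpace ℝ E]
    (p : ℝ) {n : ℕ} (x : Fin n → E) : ℝ :=
  sSup {s : ℝ | ∃ φ : E →L[ℝ] ℝ, ‖φ‖ ≤ 1 ∧ (∀ y, 0 ≤ y → 0 ≤ φ y) ∧
    s = (∑ i, (φ (x i)) ^ p) ^ (1 / p)}

/-- The weak `ℓ_r` norm of a finite positive family of functionals on `F`, over the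
positive bidual unit ball. -/
noncomputable def wnormDualPos {F : Type*} [NormedAddCommGroup F] [Lattice F] [HasSolidNorm F]
    [IsOrderedAddMonoid F] [NormedSpace ℝ F]
    (r : ℝ) {n : ℕ} (y : Fin n → (F →L[ℝ] ℝ)) : ℝ :=
  sSup {s : ℝ | ∃ ψ : (F →L[ℝ] ℝ) →L[ℝ] ℝ, ‖ψ‖ ≤ 1 ∧
    (∀ φ : F →L[ℝ] ℝ, (∀ z, 0 ≤ z → 0 ≤ φ z) → 0 ≤ ψ φ) ∧
    s = (∑ i, (ψ (y i)) ^ r) ^ (1 / r)}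

/-- `T` is positive `(p₁,…,p_m;r)`-dominated with constant `C`. -/
def IsPosDominated {m : ℕ} {E : Fin m → Type*}
    [∀ j, NormedAddCommGroup (E j)] [∀ j, Lattice (E j)]
    [∀ j, HasSolidNorm (E j)] [∀ j, IsOrderedAddMonoid (E j)] [∀ j, NormedSpace ℝ (E j)]
    {F : Type*} [NormedAddCommGroup F] [Lattice F] [HasSolidNorm F]
    [IsOrderedAddMonoid F] [NormedSpace ℝ F]
    (p : ℝ) (pj : Fin m → ℝ) (r : ℝ)
    (T : ContinuousMultilinearMap ℝ E F) (C : ℝ) : Prop :=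
  ∀ (n : ℕ) (x : Fin n → ∀ j, E j) (y : Fin n → (F →L[ℝ] ℝ)),
    (∀ i j, 0 ≤ x i j) → (∀ i, ∀ z, 0 ≤ z → 0 ≤ y i z) →
    (∑ i, |y i (T (x i))| ^ p) ^ (1 / p) ≤
      C * (∏ j, wnormPos (pj j) (fun i => x i j)) * wnormDualPos r y

/-- `d⁺_{(p₁,…,p_m;r)}(T)`. -/
noncomputable def posDominatedNorm {m : ℕ} {E : Fin m → Type*}
    [∀ j, NormedAddCommGroup (E j)] [∀ j, Lattice (E j)]
    [∀ j, HasSolidNorm (E j)] [∀ j, IsOrderedAddMonoid (E j)] [∀ j, NormedSpace ℝ (E j)]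
    {F : Type*} [NormedAddCommGroup F] [Lattice F] [HasSolidNorm F]
    [IsOrderedAddMonoid F] [NormedSpace ℝ F]
    (p : ℝ) (pj : Fin m → ℝ) (r : ℝ) (T : ContinuousMultilinearMap ℝ E F) : ℝ :=
  sInf {C : ℝ | 0 < C ∧ IsPosDominated p pj r T C}

/-!
Composing with positive operators keeps positive families positive, and the weak `ℓ_p` norms
only grow by the operator norm: if `φ` is a positive functional in the dual unit ball, then so
is `‖u‖⁻¹ • φ ∘ u`, which rescales `(∑ φ (u xᵢ)^p)^{1/p}` by `‖u‖`. For the functionals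
`yᵢ` on `G` the same argument runs on `G*` with the precomposition map `y ↦ y ∘ v`, which maps
positive functionals to positive functionals. Substituting these bounds into the domination
inequality of `T` gives the constant `‖v‖ C ∏ ‖u_j‖`.
-/

open Finset

section ConeWeakNorm

variable {X Y : Type*} [NormedAddCommGroup X] [NormedSpace ℝ X]
  [NormedAddCommGroup Y] [NormedSpace ℝ Y] {K : Set X} {L : Set Y} {p : ℝ} {n : ℕ}

/-- `wnormPos` and `wnormDualPos` are the cases where `K` is the positive cone of `E`, resp. of
`F*` (the functionals that are nonnegative on positive vectors). -/
noncomputable def coneWeakNorm (K : Set X) (p : ℝ) (x : Fin n → X) : ℝ :=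
  sSup {s : ℝ | ∃ φ : X →L[ℝ] ℝ, ‖φ‖ ≤ 1 ∧ (∀ y ∈ K, 0 ≤ φ y) ∧
    s = (∑ i, (φ (x i)) ^ p) ^ (1 / p)}

lemma coneWeakNorm_nonneg {x : Fin n → X} (hx : ∀ i, x i ∈ K) : 0 ≤ coneWeakNorm K p x := by
  refine Real.sSup_nonneg ?_
  rintro s ⟨φ, -, hφ, rfl⟩
  exact Real.rpow_nonneg (sum_nonneg fun i _ => Real.rpow_nonneg (hφ _ (hx i)) p) _

lemma le_coneWeakNorm (hp : 0 < p) {x : Fin n → X} (hx : ∀ i, x i ∈ K) {φ : X →L[ℝ] ℝ}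
    (hφ₁ : ‖φ‖ ≤ 1) (hφK : ∀ y ∈ K, 0 ≤ φ y) :
    (∑ i, (φ (x i)) ^ p) ^ (1 / p) ≤ coneWeakNorm K p x := by
  refine le_csSup ⟨(∑ i, ‖x i‖ ^ p) ^ (1 / p), ?_⟩ ⟨φ, hφ₁, hφK, rfl⟩
  rintro s ⟨ψ, hψ₁, hψK, rfl⟩
  have hψ₀ : ∀ i, 0 ≤ ψ (x i) := fun i => hψK _ (hx i)
  have hψx : ∀ i, ψ (x i) ≤ ‖x i‖ := fun i =>
    (le_abs_self _).trans ((ψ.le_of_opNorm_le hψ₁ _).trans_eq (one_mul _))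
  exact Real.rpow_le_rpow (sum_nonneg fun i _ => Real.rpow_nonneg (hψ₀ i) p)
    (sum_le_sum fun i _ => Real.rpow_le_rpow (hψ₀ i) (hψx i) hp.le) (by positivity)

lemma rpow_sum_mul_rpow_one_div (hp : p ≠ 0) {c : ℝ} (hc : 0 ≤ c) {f : Fin n → ℝ}
    (hf : ∀ i, 0 ≤ f i) :
    (∑ i, (c * f i) ^ p) ^ (1 / p) = c * (∑ i, f i ^ p) ^ (1 / p) := by
  simp only [Real.mul_rpow hc (hf _), ← mul_sum]
  rw [Real.mul_rpow (by positivity) (sum_nonneg fun i _ => Real.rpow_nonneg (hf i) p),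
    ← Real.rpow_mul hc, mul_one_div_cancel hp, Real.rpow_one]

/-- Also true for `‖A‖ = 0`, where `‖A‖⁻¹ = 0` but `A = 0`. -/
lemma norm_mul_inv_norm_smul_comp_apply (φ : X →L[ℝ] ℝ) (A : Y →L[ℝ] X) (y : Y) :
    ‖A‖ * (‖A‖⁻¹ • φ.comp A) y = φ (A y) := by
  rcases eq_or_ne ‖A‖ 0 with hA | hA
  · simp [norm_eq_zero.mp hA]
  · simp [hA]

lemma coneWeakNorm_comp_le (hp : 0 < p) (A : Y →L[ℝ] X) (hA : Set.MapsTo A L K)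
    {x : Fin n → Y} (hx : ∀ i, x i ∈ L) :
    coneWeakNorm K p (fun i => A (x i)) ≤ ‖A‖ * coneWeakNorm L p x := by
  refine Real.sSup_le ?_ (mul_nonneg (norm_nonneg A) (coneWeakNorm_nonneg hx))
  rintro s ⟨φ, hφ₁, hφK, rfl⟩
  set φ' : Y →L[ℝ] ℝ := ‖A‖⁻¹ • φ.comp A
  have hφ'₁ : ‖φ'‖ ≤ 1 := calc
    ‖φ'‖ ≤ ‖A‖⁻¹ * (‖φ‖ * ‖A‖) := by
      rw [norm_smul, norm_inv, norm_norm]; gcongr; exact φ.opNorm_comp_le A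
    _ ≤ ‖A‖⁻¹ * ‖A‖ := by gcongr; exact mul_le_of_le_one_left (norm_nonneg A) hφ₁
    _ ≤ 1 := inv_mul_le_one
  have hφ'L : ∀ y ∈ L, 0 ≤ φ' y := fun y hy =>
    mul_nonneg (inv_nonneg.mpr (norm_nonneg A)) (hφK _ (hA hy))
  calc (∑ i, (φ (A (x i))) ^ p) ^ (1 / p)
      = ‖A‖ * (∑ i, (φ' (x i)) ^ p) ^ (1 / p) := by
        simp only [← norm_mul_inv_norm_smul_comp_apply φ A]
        exact rpow_sum_mul_rpow_one_div hp.ne' (norm_nonneg A) fun i => hφ'L _ (hx i)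
    _ ≤ ‖A‖ * coneWeakNorm L p x := by gcongr; exact le_coneWeakNorm hp hx hφ'₁ hφ'L

end ConeWeakNorm

section PositiveCone

variable {E G : Type*} [NormedAddCommGroup E] [Lattice E] [HasSolidNorm E]
  [IsOrderedAddMonoid E] [NormedSpace ℝ E] [NormedAddCommGroup G] [Lattice G] [HasSolidNorm G]
  [IsOrderedAddMonoid G] [NormedSpace ℝ G] {p : ℝ} {n : ℕ}

lemma wnormPos_nonneg {x : Fin n → E} (hx : ∀ i, 0 ≤ x i) : 0 ≤ wnormPos p x :=
  coneWeakNorm_nonneg (K := {z | 0 ≤ z}) hx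

lemma wnormPos_comp_le (hp : 0 < p) (u : G →L[ℝ] E) (hu : ∀ z, 0 ≤ z → 0 ≤ u z)
    {x : Fin n → G} (hx : ∀ i, 0 ≤ x i) :
    wnormPos p (fun i => u (x i)) ≤ ‖u‖ * wnormPos p x :=
  coneWeakNorm_comp_le (K := {z | 0 ≤ z}) (L := {z | 0 ≤ z}) hp u hu hx

lemma wnormDualPos_nonneg {y : Fin n → (E →L[ℝ] ℝ)} (hy : ∀ i z, 0 ≤ z → 0 ≤ y i z) :
    0 ≤ wnormDualPos p y :=
  coneWeakNorm_nonneg (K := {φ : E →L[ℝ] ℝ | ∀ z, 0 ≤ z → 0 ≤ φ z}) hy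

lemma wnormDualPos_comp_le (hp : 0 < p) (v : E →L[ℝ] G) (hv : ∀ z, 0 ≤ z → 0 ≤ v z)
    {y : Fin n → (G →L[ℝ] ℝ)} (hy : ∀ i z, 0 ≤ z → 0 ≤ y i z) :
    wnormDualPos p (fun i => (y i).comp v) ≤ ‖v‖ * wnormDualPos p y := by
  let precomp : (G →L[ℝ] ℝ) →L[ℝ] (E →L[ℝ] ℝ) := (ContinuousLinearMap.compL ℝ E G ℝ).flip v
  have hprecomp : ‖precomp‖ ≤ ‖v‖ :=
    precomp.opNorm_le_bound (norm_nonneg v) fun φ => (φ.opNorm_comp_le v).trans_eq (mul_comm _ _)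
  calc wnormDualPos p (fun i => precomp (y i))
      ≤ ‖precomp‖ * wnormDualPos p y :=
        coneWeakNorm_comp_le (K := {φ : E →L[ℝ] ℝ | ∀ z, 0 ≤ z → 0 ≤ φ z})
          (L := {φ : G →L[ℝ] ℝ | ∀ z, 0 ≤ z → 0 ≤ φ z}) hp precomp
          (fun φ hφ z hz => hφ _ (hv z hz)) hy
    _ ≤ ‖v‖ * wnormDualPos p y := by gcongr; exact wnormDualPos_nonneg hy

end PositiveCone

section IsPosDominated

variable {m : ℕ} {E G' : Fin m → Type*}
  [∀ j, NormedAddCommGroup (E j)] [∀ j, Lattice (E j)]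
  [∀ j, HasSolidNorm (E j)] [∀ j, IsOrderedAddMonoid (E j)] [∀ j, NormedSpace ℝ (E j)]
  [∀ j, NormedAddCommGroup (G' j)] [∀ j, Lattice (G' j)]
  [∀ j, HasSolidNorm (G' j)] [∀ j, IsOrderedAddMonoid (G' j)] [∀ j, NormedSpace ℝ (G' j)]
  {F G : Type*} [NormedAddCommGroup F] [Lattice F] [HasSolidNorm F]
  [IsOrderedAddMonoid F] [NormedSpace ℝ F]
  [NormedAddCommGroup G] [Lattice G] [HasSolidNorm G]
  [IsOrderedAddMonoid G] [NormedSpace ℝ G]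
  {p r : ℝ} {pj : Fin m → ℝ} {T : ContinuousMultilinearMap ℝ E F} {C D : ℝ}

lemma IsPosDominated.mono (hT : IsPosDominated p pj r T C) (hCD : C ≤ D) :
    IsPosDominated p pj r T D := by
  intro n x y hx hy
  refine (hT n x y hx hy).trans ?_
  have hw : 0 ≤ ∏ j, wnormPos (pj j) (fun i => x i j) :=
    prod_nonneg fun j _ => wnormPos_nonneg fun i => hx i j
  exact mul_le_mul_of_nonneg_right (mul_le_mul_of_nonneg_right hCD hw)
    (wnormDualPos_nonneg hy)

lemma posDominatedNorm_le (hC : 0 ≤ C) (hT : IsPosDominated p pj r T C) :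
    posDominatedNorm p pj r T ≤ C :=
  le_of_forall_pos_le_add fun _ hε =>
    csInf_le ⟨0, fun _ hD => hD.1.le⟩ ⟨by positivity, hT.mono (le_add_of_nonneg_right hε.le)⟩

lemma IsPosDominated.comp (hr : 0 < r) (hpj : ∀ j, 0 < pj j) (hC : 0 ≤ C)
    (hT : IsPosDominated p pj r T C)
    (u : ∀ j, G' j →L[ℝ] E j) (hu : ∀ j x, 0 ≤ x → 0 ≤ u j x)
    (v : F →L[ℝ] G) (hv : ∀ y, 0 ≤ y → 0 ≤ v y) :
    IsPosDominated p pj r (v.compContinuousMultilinearMap (T.compContinuousLinearMap u))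
      ((‖v‖ * ∏ j, ‖u j‖) * C) := by
  intro n x y hx hy
  have hux : ∀ i j, 0 ≤ u j (x i j) := fun i j => hu j _ (hx i j)
  have hyv : ∀ i z, 0 ≤ z → 0 ≤ (y i).comp v z := fun i z hz => hy i _ (hv z hz)
  calc (∑ i, |(y i).comp v (T fun j => u j (x i j))| ^ p) ^ (1 / p)
      ≤ C * (∏ j, wnormPos (pj j) (fun i => u j (x i j))) *
          wnormDualPos r (fun i => (y i).comp v) :=
        hT n (fun i j => u j (x i j)) (fun i => (y i).comp v) hux hyv
    _ ≤ C * (∏ j, ‖u j‖ * wnormPos (pj j) (fun i => x i j)) * (‖v‖ * wnormDualPos r y) := by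
        gcongr
        · exact wnormDualPos_nonneg hyv
        · exact mul_nonneg hC <| prod_nonneg fun j _ =>
            mul_nonneg (norm_nonneg _) (wnormPos_nonneg fun i => hx i j)
        · exact fun j _ => wnormPos_nonneg fun i => hux i j
        · exact wnormPos_comp_le (hpj j) (u j) (hu j) fun i => hx i j
        · exact wnormDualPos_comp_le hr v hv hy
    _ = (‖v‖ * ∏ j, ‖u j‖) * C * (∏ j, wnormPos (pj j) (fun i => x i j)) *
          wnormDualPos r y := by
        rw [prod_mul_distrib]; ring

lemma posDominatedNorm_le_mul {S : ContinuousMultilinearMap ℝ G' G} {k : ℝ} (hk : 0 ≤ k)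
    (hT : ∃ C, 0 < C ∧ IsPosDominated p pj r T C)
    (hST : ∀ C, 0 < C → IsPosDominated p pj r T C → IsPosDominated p pj r S (k * C)) :
    posDominatedNorm p pj r S ≤ k * posDominatedNorm p pj r T := by
  obtain ⟨C, hC, hTC⟩ := hT
  simp only [posDominatedNorm, ← smul_eq_mul, ← Real.sInf_smul_of_nonneg hk]
  refine le_csInf (Set.Nonempty.smul_set ⟨C, hC, hTC⟩) ?_
  rintro _ ⟨D, ⟨hD, hTD⟩, rfl⟩
  exact posDominatedNorm_le (smul_nonneg hk hD.le) (hST D hD hTD)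

end IsPosDominated

theorem posDominated_ideal_property_general
    {m : ℕ} {E G' : Fin m → Type*}
    [∀ j, NormedAddCommGroup (E j)] [∀ j, Lattice (E j)]
    [∀ j, HasSolidNorm (E j)] [∀ j, IsOrderedAddMonoid (E j)] [∀ j, NormedSpace ℝ (E j)]
    [∀ j, NormedAddCommGroup (G' j)] [∀ j, Lattice (G' j)]
    [∀ j, HasSolidNorm (G' j)] [∀ j, IsOrderedAddMonoid (G' j)] [∀ j, NormedSpace ℝ (G' j)]
    {F G : Type*} [NormedAddCommGroup F] [Lattice F] [HasSolidNorm F]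
    [IsOrderedAddMonoid F] [NormedSpace ℝ F]
    [NormedAddCommGroup G] [Lattice G] [HasSolidNorm G]
    [IsOrderedAddMonoid G] [NormedSpace ℝ G]
    (p r : ℝ) (pj : Fin m → ℝ) (hr : 1 ≤ r) (hpj : ∀ j, 1 ≤ pj j)
    (T : ContinuousMultilinearMap ℝ E F)
    (hT : ∃ C, 0 < C ∧ IsPosDominated p pj r T C)
    (u : ∀ j, G' j →L[ℝ] E j) (hu : ∀ j, ∀ x, 0 ≤ x → 0 ≤ u j x)
    (v : F →L[ℝ] G) (hv : ∀ y, 0 ≤ y → 0 ≤ v y) :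
    (∃ C, 0 < C ∧ IsPosDominated p pj r
        (v.compContinuousMultilinearMap (T.compContinuousLinearMap u)) C) ∧
    posDominatedNorm p pj r
        (v.compContinuousMultilinearMap (T.compContinuousLinearMap u)) ≤
      ‖v‖ * posDominatedNorm p pj r T * ∏ j, ‖u j‖ := by
  have hr₀ : 0 < r := by linarith
  have hpj₀ : ∀ j, 0 < pj j := fun j => by linarith [hpj j]
  have hcomp : ∀ D, 0 < D → IsPosDominated p pj r T D → IsPosDominated p pj r
      (v.compContinuousMultilinearMap (T.compContinuousLinearMap u)) ((‖v‖ * ∏ j, ‖u j‖) * D) :=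
    fun D hD hTD => hTD.comp hr₀ hpj₀ hD.le u hu v hv
  have hk : 0 ≤ ‖v‖ * ∏ j, ‖u j‖ := by positivity
  obtain ⟨C, hC, hTC⟩ := hT
  -- `+ 1` because `(‖v‖ * ∏ j, ‖u j‖) * C` may vanish
  refine ⟨⟨(‖v‖ * ∏ j, ‖u j‖) * C + 1, by positivity, (hcomp C hC hTC).mono (by linarith)⟩, ?_⟩
  calc _ ≤ (‖v‖ * ∏ j, ‖u j‖) * posDominatedNorm p pj r T :=
        posDominatedNorm_le_mul hk ⟨C, hC, hTC⟩ hcomp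
    _ = ‖v‖ * posDominatedNorm p pj r T * ∏ j, ‖u j‖ := by ring

/-- Positive ideal property of positive `(p₁,…,p_m;r)`-dominated multilinear operators. -/
theorem posDominated_ideal_property
    {m : ℕ} {E G' : Fin m → Type*}
    [∀ j, NormedAddCommGroup (E j)] [∀ j, Lattice (E j)]
    [∀ j, HasSolidNorm (E j)] [∀ j, IsOrderedAddMonoid (E j)] [∀ j, NormedSpace ℝ (E j)]
    [∀ j, NormedAddCommGroup (G' j)] [∀ j, Lattice (G' j)]
    [∀ j, HasSolidNorm (G' j)] [∀ j, IsOrderedAddMonoid (G' j)] [∀ j, NormedSpace ℝ (G' j)]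
    {F G : Type*} [NormedAddCommGroup F] [Lattice F] [HasSolidNorm F]
    [IsOrderedAddMonoid F] [NormedSpace ℝ F]
    [NormedAddCommGroup G] [Lattice G] [HasSolidNorm G]
    [IsOrderedAddMonoid G] [NormedSpace ℝ G]
    (p r : ℝ) (pj : Fin m → ℝ) (hr : 1 ≤ r) (hpj : ∀ j, 1 ≤ pj j) (hp : 1 ≤ p)
    (hhol : 1 / p = (∑ j, 1 / pj j) + 1 / r)
    (T : ContinuousMultilinearMap ℝ E F)
    (hT : ∃ C, 0 < C ∧ IsPosDominated p pj r T C)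
    (u : ∀ j, G' j →L[ℝ] E j) (hu : ∀ j, ∀ x, 0 ≤ x → 0 ≤ u j x)
    (v : F →L[ℝ] G) (hv : ∀ y, 0 ≤ y → 0 ≤ v y) :
    (∃ C, 0 < C ∧ IsPosDominated p pj r
        (v.compContinuousMultilinearMap (T.compContinuousLinearMap u)) C) ∧
    posDominatedNorm p pj r
        (v.compContinuousMultilinearMap (T.compContinuousLinearMap u)) ≤
      ‖v‖ * posDominatedNorm p pj r T * ∏ j, ‖u j‖ :=
  posDominated_ideal_property_general p r pj hr hpj T hT u hu v hv
end

section
/- Equivalent formulation for positive (p₁,…,p_m)-dominated operators: let 1 ≤ p, p₁,…,p_m < ∞ with 1/p = 1/p₁ + ⋯ + 1/p_m, E_j Banach lattices, Y a Banach space, T ∈ L(E₁,…,E_m;Y). Then T satisfies (Σ_i ‖T(x_i¹,…,x_i^m)‖^p)^{1/p} ≤ C ∏_j ‖(x_i^j)‖_{p_j,w} for all positive finite families x_i^j ∈ E_j⁺ if and only if it satisfies (Σ_i ‖T(x_i¹,…,x_i^m)‖^p)^{1/p} ≤ C' ∏_j ‖(x_i^j)‖_{p_j,|w|} for arbitrary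 finite families x_i^j ∈ E_j, with C' ≤ 2^m C. -/
/-!
Write `x_i^j = (x_i^j)⁺ - (x_i^j)⁻` and expand `T` multilinearly: `T (x_i)` becomes a signed sum of
`2^m` values of `T` at positive vectors whose coordinates lie below `|x_i^j|`. Minkowski's inequality
in `ℓ_p` then reduces the first implication to the hypothesis on positive families, provided the
weak norm is monotone under `|y_i| ≤ z_i`. This holds because any functional `φ` may be replaced by
its modulus `|φ|(z) = sup {φ u : |u| ≤ z}`, which is additive on the positive cone (Riesz
decomposition), has norm at most `‖φ‖` and satisfies `|φ y| ≤ |φ| z`. The converse is immediate,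
since `|x| = x` for positive `x`.
-/

/-- The weak `ℓ_p` norm of a finite family in a Banach space, over the dual unit ball. -/
noncomputable def wnorm {E : Type*} [NormedAddCommGroup E] [NormedSpace ℝ E]
    (p : ℝ) {n : ℕ} (x : Fin n → E) : ℝ :=
  sSup {s : ℝ | ∃ φ : E →L[ℝ] ℝ, ‖φ‖ ≤ 1 ∧ s = (∑ i, |φ (x i)| ^ p) ^ (1 / p)}

open scoped Pointwise

section LatticeOrderedGroup

variable {α : Type*} [AddCommGroup α] [Lattice α] [IsOrderedAddMonoid α]

theorem abs_le_iff_mem_Icc {a b : α} : |a| ≤ b ↔ a ∈ Set.Icc (-b) b := by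
  rw [abs_le', Set.mem_Icc, neg_le, and_comm]

theorem posPart_le_abs (a : α) : a⁺ ≤ |a| :=
  posPart_add_negPart a ▸ le_add_of_nonneg_right (negPart_nonneg a)

theorem negPart_le_abs (a : α) : a⁻ ≤ |a| :=
  posPart_add_negPart a ▸ le_add_of_nonneg_left (posPart_nonneg a)

/-- The Riesz decomposition property of lattice-ordered groups. -/
theorem Icc_neg_add_eq_add_Icc_neg {a b : α} (ha : 0 ≤ a) (hb : 0 ≤ b) :
    Set.Icc (-(a + b)) (a + b) = Set.Icc (-a) a + Set.Icc (-b) b := by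
  refine Set.Subset.antisymm (fun u ⟨hlo, hhi⟩ => ?_) ?_
  · refine ⟨(u ⊔ -a) ⊓ a, ⟨le_inf le_sup_right (neg_le_self ha), inf_le_right⟩,
      u - (u ⊔ -a) ⊓ a, ⟨?_, ?_⟩, add_sub_cancel _ _⟩
    · rw [neg_le_sub_iff_le_add]
      refine inf_le_left.trans (sup_le (le_add_of_nonneg_right hb) ?_)
      rwa [neg_add, ← sub_eq_add_neg, sub_le_iff_le_add] at hlo
    · rw [sub_le_comm]
      exact le_inf ((sub_le_self u hb).trans le_sup_left) (sub_le_iff_le_add.mpr hhi)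
  · rw [neg_add]
    exact Set.Icc_add_Icc_subset _ _ _ _

theorem posPart_add_negPart_add_negPart (a b : α) :
    (a + b)⁺ + (a⁻ + b⁻) = (a + b)⁻ + (a⁺ + b⁺) :=
  calc (a + b)⁺ + (a⁻ + b⁻) = ((a + b)⁺ - (a + b)⁻) + (a + b)⁻ + (a⁻ + b⁻) := by abel
    _ = (a⁺ - a⁻) + (b⁺ - b⁻) + (a + b)⁻ + (a⁻ + b⁻) := by
      simp only [posPart_sub_negPart]
    _ = (a + b)⁻ + (a⁺ + b⁺) := by abel

def AddMonoidHom.ofNonneg {β : Type*} [AddCommGroup β] (f : α → β)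
    (hf : ∀ a b, 0 ≤ a → 0 ≤ b → f (a + b) = f a + f b) : α →+ β :=
  AddMonoidHom.mk' (fun w => f w⁺ - f w⁻) fun a b => by
    have h := congrArg f (posPart_add_negPart_add_negPart a b)
    simp only [hf, posPart_nonneg, negPart_nonneg, add_nonneg] at h
    rw [sub_add_sub_comm, sub_eq_sub_iff_add_eq_add, h, add_comm]

theorem AddMonoidHom.ofNonneg_apply_of_nonneg {β : Type*} [AddCommGroup β] (f : α → β)
    (hf : ∀ a b, 0 ≤ a → 0 ≤ b → f (a + b) = f a + f b) {z : α} (hz : 0 ≤ z) :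
    AddMonoidHom.ofNonneg f hf z = f z := by
  have hf0 : f 0 = 0 := by simpa using hf 0 0 le_rfl le_rfl
  simp [AddMonoidHom.ofNonneg, posPart_eq_self.mpr hz, negPart_eq_zero.mpr hz, hf0]

end LatticeOrderedGroup

section Modulus

variable {F : Type*} [NormedAddCommGroup F] [Lattice F] [IsOrderedAddMonoid F] [HasSolidNorm F]

theorem norm_le_of_mem_Icc_neg {u z : F} (hu : u ∈ Set.Icc (-z) z) : ‖u‖ ≤ ‖z‖ :=
  HasSolidNorm.solid ((abs_le_iff_mem_Icc.mpr hu).trans (le_abs_self z))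

variable [NormedSpace ℝ F]

/-- For `z ≥ 0` this is the modulus `|φ|(z) = sup {φ u : |u| ≤ z}` of the functional `φ`. -/
noncomputable def supIcc (φ : F →L[ℝ] ℝ) (z : F) : ℝ :=
  sSup (φ '' Set.Icc (-z) z)

omit [HasSolidNorm F] in
theorem image_Icc_neg_nonempty (φ : F →L[ℝ] ℝ) {z : F} (hz : 0 ≤ z) :
    (φ '' Set.Icc (-z) z).Nonempty :=
  ⟨φ 0, 0, ⟨neg_nonpos.mpr hz, hz⟩, rfl⟩

theorem opNorm_mul_norm_mem_upperBounds (φ : F →L[ℝ] ℝ) (z : F) :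
    ‖φ‖ * ‖z‖ ∈ upperBounds (φ '' Set.Icc (-z) z) := by
  rintro _ ⟨u, hu, rfl⟩
  exact (le_abs_self _).trans ((φ.le_opNorm u).trans (by gcongr; exact norm_le_of_mem_Icc_neg hu))

theorem abs_le_supIcc (φ : F →L[ℝ] ℝ) {u z : F} (hu : |u| ≤ z) : |φ u| ≤ supIcc φ z := by
  have hmem (v : F) (hv : |v| ≤ z) : φ v ≤ supIcc φ z :=
    le_csSup ⟨_, opNorm_mul_norm_mem_upperBounds φ z⟩ ⟨v, abs_le_iff_mem_Icc.mp hv, rfl⟩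
  exact abs_le.mpr ⟨neg_le.mpr (by simpa using hmem (-u) (by rwa [abs_neg])), hmem u hu⟩

theorem supIcc_nonneg (φ : F →L[ℝ] ℝ) {z : F} (hz : 0 ≤ z) : 0 ≤ supIcc φ z := by
  simpa using abs_le_supIcc φ (u := 0) (by simpa using hz)

theorem supIcc_le (φ : F →L[ℝ] ℝ) {z : F} (hz : 0 ≤ z) : supIcc φ z ≤ ‖φ‖ * ‖z‖ :=
  csSup_le (image_Icc_neg_nonempty φ hz) (opNorm_mul_norm_mem_upperBounds φ z)

theorem supIcc_add (φ : F →L[ℝ] ℝ) {a b : F} (ha : 0 ≤ a) (hb : 0 ≤ b) :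
    supIcc φ (a + b) = supIcc φ a + supIcc φ b := by
  rw [supIcc, Icc_neg_add_eq_add_Icc_neg ha hb, Set.image_add,
    csSup_add (image_Icc_neg_nonempty φ ha) ⟨_, opNorm_mul_norm_mem_upperBounds φ a⟩
      (image_Icc_neg_nonempty φ hb) ⟨_, opNorm_mul_norm_mem_upperBounds φ b⟩]
  rfl

noncomputable def modulusAddHom (φ : F →L[ℝ] ℝ) : F →+ ℝ :=
  AddMonoidHom.ofNonneg (supIcc φ) fun _ _ => supIcc_add φ

theorem norm_modulusAddHom_le (φ : F →L[ℝ] ℝ) (w : F) :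
    ‖modulusAddHom φ w‖ ≤ ‖φ‖ * ‖w‖ := by
  have hpart {v : F} (hv : 0 ≤ v) (hvw : v ≤ |w|) : supIcc φ v ≤ ‖φ‖ * ‖w‖ :=
    (supIcc_le φ hv).trans (by
      gcongr
      exact HasSolidNorm.solid ((abs_of_nonneg hv).trans_le hvw))
  have h₁ := supIcc_nonneg φ (posPart_nonneg w)
  have h₂ := supIcc_nonneg φ (negPart_nonneg w)
  have h₃ := hpart (posPart_nonneg w) (posPart_le_abs w)
  have h₄ := hpart (negPart_nonneg w) (negPart_le_abs w)
  change |supIcc φ w⁺ - supIcc φ w⁻| ≤ _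
  rw [abs_sub_le_iff]
  constructor <;> linarith

/-- The modulus `|φ|`. Its `ℝ`-linearity comes from additivity and continuity, so no compatibility
of the order with scalar multiplication is needed. -/
noncomputable def modulus (φ : F →L[ℝ] ℝ) : F →L[ℝ] ℝ :=
  (modulusAddHom φ).toRealLinearMap
    (AddMonoidHomClass.lipschitz_of_bound _ _ (norm_modulusAddHom_le φ)).continuous

theorem norm_modulus_le (φ : F →L[ℝ] ℝ) : ‖modulus φ‖ ≤ ‖φ‖ :=
  ContinuousLinearMap.opNorm_le_bound _ (norm_nonneg φ) (norm_modulusAddHom_le φ)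

theorem modulus_apply_of_nonneg (φ : F →L[ℝ] ℝ) {z : F} (hz : 0 ≤ z) :
    modulus φ z = supIcc φ z :=
  AddMonoidHom.ofNonneg_apply_of_nonneg _ (fun _ _ => supIcc_add φ) hz

theorem abs_apply_le_modulus (φ : F →L[ℝ] ℝ) {y z : F} (hz : 0 ≤ z) (h : |y| ≤ z) :
    |φ y| ≤ modulus φ z :=
  (abs_le_supIcc φ h).trans_eq (modulus_apply_of_nonneg φ hz).symm

end Modulus

section WeakNorm

variable {G : Type*} [NormedAddCommGroup G] [NormedSpace ℝ G] {n : ℕ}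

theorem wnorm_nonneg (p : ℝ) (x : Fin n → G) : 0 ≤ wnorm p x :=
  Real.sSup_nonneg fun _ ⟨_, _, hs⟩ => hs ▸ by positivity

theorem wnorm_bddAbove {p : ℝ} (hp : 0 ≤ p) (x : Fin n → G) :
    BddAbove {s : ℝ | ∃ φ : G →L[ℝ] ℝ, ‖φ‖ ≤ 1 ∧ s = (∑ i, |φ (x i)| ^ p) ^ (1 / p)} := by
  refine ⟨(∑ i, ‖x i‖ ^ p) ^ (1 / p), ?_⟩
  rintro _ ⟨φ, hφ, rfl⟩
  gcongr with i
  exact (φ.le_opNorm (x i)).trans (mul_le_of_le_one_left (norm_nonneg _) hφ)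

theorem le_wnorm {p : ℝ} (hp : 0 ≤ p) (x : Fin n → G) {φ : G →L[ℝ] ℝ} (hφ : ‖φ‖ ≤ 1) :
    (∑ i, |φ (x i)| ^ p) ^ (1 / p) ≤ wnorm p x :=
  le_csSup (wnorm_bddAbove hp x) ⟨φ, hφ, rfl⟩

theorem wnorm_le_wnorm_of_abs_le {F : Type*} [NormedAddCommGroup F] [Lattice F]
    [IsOrderedAddMonoid F] [HasSolidNorm F] [NormedSpace ℝ F] {p : ℝ} (hp : 0 ≤ p)
    {y z : Fin n → F} (hz : ∀ i, 0 ≤ z i) (h : ∀ i, |y i| ≤ z i) : wnorm p y ≤ wnorm p z := by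
  refine csSup_le ⟨_, 0, by simp, rfl⟩ ?_
  rintro _ ⟨φ, hφ, rfl⟩
  refine le_trans ?_ (le_wnorm hp z ((norm_modulus_le φ).trans hφ))
  gcongr (∑ i, ?_ ^ p) ^ (1 / p) with i
  exact (abs_apply_le_modulus φ (hz i) (h i)).trans (le_abs_self _)

end WeakNorm

theorem Lp_sum_le_sum_Lp_of_nonneg {ι κ : Type*} (s : Finset ι) (t : Finset κ) {p : ℝ}
    (hp : 1 ≤ p) (f : ι → κ → ℝ) (hf : ∀ e ∈ s, ∀ i ∈ t, 0 ≤ f e i) :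
    (∑ i ∈ t, (∑ e ∈ s, f e i) ^ p) ^ (1 / p) ≤ ∑ e ∈ s, (∑ i ∈ t, f e i ^ p) ^ (1 / p) := by
  classical
  induction s using Finset.cons_induction with
  | empty =>
    simp [Real.zero_rpow (by positivity : p ≠ 0), Real.zero_rpow (by positivity : p⁻¹ ≠ 0)]
  | cons a s _ ih =>
    simp only [Finset.sum_cons] at hf ⊢
    have hf' : ∀ e ∈ s, ∀ i ∈ t, 0 ≤ f e i := fun e he => hf e (Finset.mem_cons_of_mem he)
    refine (Real.Lp_add_le_of_nonneg t hp (hf a (Finset.mem_cons_self a s))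
      fun i hi => Finset.sum_nonneg fun e he => hf' e he i hi).trans ?_
    gcongr
    exact ih hf'

section PosNegPart

variable {ι : Type*} [DecidableEq ι] {E : ι → Type*} [∀ j, AddCommGroup (E j)]
  [∀ j, Lattice (E j)]

def posNegPart (s : Finset ι) (x : ∀ j, E j) : ∀ j, E j :=
  s.piecewise x⁺ x⁻

theorem posNegPart_nonneg (s : Finset ι) (x : ∀ j, E j) (j : ι) : 0 ≤ posNegPart s x j :=
  s.piecewise_cases _ _ (0 ≤ ·) (posPart_nonneg (x j)) (negPart_nonneg (x j))

variable [∀ j, IsOrderedAddMonoid (E j)]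

theorem abs_posNegPart_le (s : Finset ι) (x : ∀ j, E j) (j : ι) :
    |posNegPart s x j| ≤ |x j| := by
  rw [abs_of_nonneg (posNegPart_nonneg s x j)]
  exact s.piecewise_cases _ _ (· ≤ |x j|) (posPart_le_abs (x j)) (negPart_le_abs (x j))

variable [Fintype ι] [∀ j, Module ℝ (E j)] [∀ j, TopologicalSpace (E j)]
  {Y : Type*} [NormedAddCommGroup Y] [NormedSpace ℝ Y]

theorem norm_apply_le_sum_norm_apply_posNegPart (T : ContinuousMultilinearMap ℝ E Y)
    (x : ∀ j, E j) : ‖T x‖ ≤ ∑ s : Finset ι, ‖T (posNegPart s x)‖ := by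
  have hterm (s : Finset ι) : ‖T (s.piecewise x⁺ (-x⁻))‖ = ‖T (posNegPart s x)‖ := by
    have hsign : s.piecewise x⁺ (-x⁻) =
        sᶜ.piecewise (fun j => (-1 : ℝ) • posNegPart s x j) (posNegPart s x) := by
      ext j
      by_cases hj : j ∈ s <;> simp [posNegPart, hj]
    rw [hsign, T.map_piecewise_smul, norm_smul]
    simp
  calc ‖T x‖ = ‖∑ s : Finset ι, T (s.piecewise x⁺ (-x⁻))‖ := by
        rw [← T.map_add_univ, ← sub_eq_add_neg, posPart_sub_negPart]
    _ ≤ ∑ s : Finset ι, ‖T (s.piecewise x⁺ (-x⁻))‖ := norm_sum_le _ _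
    _ = ∑ s : Finset ι, ‖T (posNegPart s x)‖ := Finset.sum_congr rfl fun s _ => hterm s

theorem Lp_norm_apply_le_sum_Lp_norm_apply_posNegPart (T : ContinuousMultilinearMap ℝ E Y)
    {κ : Type*} (t : Finset κ) {p : ℝ} (hp : 1 ≤ p) (x : κ → ∀ j, E j) :
    (∑ i ∈ t, ‖T (x i)‖ ^ p) ^ (1 / p) ≤
      ∑ s : Finset ι, (∑ i ∈ t, ‖T (posNegPart s (x i))‖ ^ p) ^ (1 / p) :=
  calc (∑ i ∈ t, ‖T (x i)‖ ^ p) ^ (1 / p)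
      ≤ (∑ i ∈ t, (∑ s : Finset ι, ‖T (posNegPart s (x i))‖) ^ p) ^ (1 / p) := by
        gcongr with i
        exact norm_apply_le_sum_norm_apply_posNegPart T (x i)
    _ ≤ _ := Lp_sum_le_sum_Lp_of_nonneg _ t hp _ fun _ _ _ _ => norm_nonneg _

end PosNegPart

theorem posPSDominated_equiv_absolute_formulation_general
    {m : ℕ} {E : Fin m → Type*}
    [∀ j, NormedAddCommGroup (E j)] [∀ j, Lattice (E j)] [∀ j, IsOrderedAddMonoid (E j)]
    [∀ j, HasSolidNorm (E j)] [∀ j, NormedSpace ℝ (E j)]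
    {Y : Type*} [NormedAddCommGroup Y] [NormedSpace ℝ Y]
    (p : ℝ) (pj : Fin m → ℝ) (hpj : ∀ j, 1 ≤ pj j) (hp : 1 ≤ p)
    (T : ContinuousMultilinearMap ℝ E Y) :
    (∀ C : ℝ, 0 < C →
      (∀ (n : ℕ) (x : Fin n → ∀ j, E j), (∀ i j, 0 ≤ x i j) →
        (∑ i, ‖T (x i)‖ ^ p) ^ (1 / p) ≤ C * ∏ j, wnorm (pj j) (fun i => x i j)) →
      (∀ (n : ℕ) (x : Fin n → ∀ j, E j),
        (∑ i, ‖T (x i)‖ ^ p) ^ (1 / p) ≤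
          (2 ^ m * C) * ∏ j, wnorm (pj j) (fun i => |x i j|))) ∧
    (∀ C' : ℝ, 0 < C' →
      (∀ (n : ℕ) (x : Fin n → ∀ j, E j),
        (∑ i, ‖T (x i)‖ ^ p) ^ (1 / p) ≤ C' * ∏ j, wnorm (pj j) (fun i => |x i j|)) →
      (∀ (n : ℕ) (x : Fin n → ∀ j, E j), (∀ i j, 0 ≤ x i j) →
        (∑ i, ‖T (x i)‖ ^ p) ^ (1 / p) ≤ C' * ∏ j, wnorm (pj j) (fun i => x i j))) := by
  refine ⟨fun C hC hyp n x => ?_, fun C' _ hyp n x hx => ?_⟩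
  · have hpart (s : Finset (Fin m)) : (∑ i, ‖T (posNegPart s (x i))‖ ^ p) ^ (1 / p) ≤
        C * ∏ j, wnorm (pj j) (fun i => |x i j|) := by
      refine (hyp n _ fun i => posNegPart_nonneg s (x i)).trans ?_
      gcongr with j
      · exact fun j _ => wnorm_nonneg _ _
      · exact wnorm_le_wnorm_of_abs_le (by linarith [hpj j]) (fun i => abs_nonneg _)
          fun i => abs_posNegPart_le s (x i) j
    calc (∑ i, ‖T (x i)‖ ^ p) ^ (1 / p)
        ≤ ∑ s : Finset (Fin m), (∑ i, ‖T (posNegPart s (x i))‖ ^ p) ^ (1 / p) :=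
          Lp_norm_apply_le_sum_Lp_norm_apply_posNegPart T _ hp x
      _ ≤ ∑ _s : Finset (Fin m), C * ∏ j, wnorm (pj j) (fun i => |x i j|) :=
          Finset.sum_le_sum fun s _ => hpart s
      _ = (2 ^ m * C) * ∏ j, wnorm (pj j) (fun i => |x i j|) := by
          simp [Fintype.card_finset, mul_assoc]
  · simpa only [abs_of_nonneg (hx _ _)] using hyp n x

/-- Equivalent formulation for positive `(p₁,…,p_m)`-dominated operators: the summing
inequality for positive families (with weak norms) with constant `C` implies the
inequality for arbitrary families (with `|w|`-norms) with constant `2^m C`, and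
conversely with the same constant. -/
theorem posPSDominated_equiv_absolute_formulation
    {m : ℕ} {E : Fin m → Type*}
    [∀ j, NormedAddCommGroup (E j)] [∀ j, Lattice (E j)] [∀ j, IsOrderedAddMonoid (E j)]
    [∀ j, HasSolidNorm (E j)] [∀ j, NormedSpace ℝ (E j)]
    {Y : Type*} [NormedAddCommGroup Y] [NormedSpace ℝ Y]
    (p : ℝ) (pj : Fin m → ℝ) (hpj : ∀ j, 1 ≤ pj j) (hp : 1 ≤ p)
    (hhol : 1 / p = ∑ j, 1 / pj j)
    (T : ContinuousMultilinearMap ℝ E Y) :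
    (∀ C : ℝ, 0 < C →
      (∀ (n : ℕ) (x : Fin n → ∀ j, E j), (∀ i j, 0 ≤ x i j) →
        (∑ i, ‖T (x i)‖ ^ p) ^ (1 / p) ≤ C * ∏ j, wnorm (pj j) (fun i => x i j)) →
      (∀ (n : ℕ) (x : Fin n → ∀ j, E j),
        (∑ i, ‖T (x i)‖ ^ p) ^ (1 / p) ≤
          (2 ^ m * C) * ∏ j, wnorm (pj j) (fun i => |x i j|))) ∧
    (∀ C' : ℝ, 0 < C' →
      (∀ (n : ℕ) (x : Fin n → ∀ j, E j),
        (∑ i, ‖T (x i)‖ ^ p) ^ (1 / p) ≤ C' * ∏ j, wnorm (pj j) (fun i => |x i j|)) →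
      (∀ (n : ℕ) (x : Fin n → ∀ j, E j), (∀ i j, 0 ≤ x i j) →
        (∑ i, ‖T (x i)‖ ^ p) ^ (1 / p) ≤ C' * ∏ j, wnorm (pj j) (fun i => x i j))) :=
  posPSDominated_equiv_absolute_formulation_general p pj hpj hp T
end
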